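/- Let N ≥ 2, n ≥ 2, and let χ⁽¹⁾,…,χ⁽ⁿ⁾ be the vanishing-order sequences of n nonzero partitions of N. For k ∈ {2,…,N} define d_k := (n−1)k − 1 − ∑_{a=1}^{n} χ⁽ᵃ⁾_k (an integer). If d_N ≥ −1 and ∑_{k=2}^{N} (d_k + 1) ≥ 0, then d_k ≥ −1 for every k ∈ {2,…,N}. (This expresses that, in the presence of a regular puncture, Simpson's two conditions for the existence of the irreducible character variety are equivalent to the 'OK' condition deg(L_k) ≥ −1 for all k.) -/

import Mathlib

/-- `p` (with parts indexed from 1) is a partition of `N`: the parts are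
nonincreasing, sum to `N`, and vanish beyond index `N`. -/
def IsPartitionOf (N : ℕ) (p : ℕ → ℕ) : Prop :=
  (∀ i, 1 ≤ i → p (i + 1) ≤ p i) ∧
  (∑ j ∈ Finset.Icc 1 N, p j = N) ∧
  (∀ i, N < i → p i = 0)

/-- The vanishing order at `k` of the partition `p`: the least positive
integer `i` such that `p 1 + ⋯ + p i ≥ k`. -/
noncomputable def chiOf (p : ℕ → ℕ) (k : ℕ) : ℕ :=
  sInf {i | 1 ≤ i ∧ k ≤ ∑ j ∈ Finset.Icc 1 i, p j}

/-- `χ` is the vanishing-order sequence, on `{1,…,N}`, of the partition `p` of `N`. -/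
def IsVanishingOrderSeq (N : ℕ) (p : ℕ → ℕ) (χ : ℕ → ℕ) : Prop :=
  IsPartitionOf N p ∧ ∀ k, 1 ≤ k → k ≤ N → χ k = chiOf p k

/-! Concavity of the partial sums of a partition gives the chord bound
`N (χ_k - 1) ≤ (k - 1) χ_N`, and the slacks of these bounds, summed over the `n` partitions, add up
to exactly `N (d_k + 2) - (k - 1) (d_N + 1)`. So if `d_N ≥ -1` and `d_k ≤ -2`, every chord bound is
attained and `d_N = -1`. Attaining it forces a partition to be rectangular, `N = χ_N p₁` with
`p₁ ≥ 2`, and then `∑ χ_N = (n - 1) N` forces `n = 2` and `p₁ = 2` for both partitions. For those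
`χ_j ≥ j / 2`, so every `d_j ≤ -1` and `∑ (d_j + 1) < 0`. -/

open Finset

def partialSum (p : ℕ → ℕ) (i : ℕ) : ℕ :=
  ∑ j ∈ Icc 1 i, p j

def hitchinDegree (n : ℕ) (χ : Fin n → ℕ → ℕ) (k : ℕ) : ℤ :=
  ((n : ℤ) - 1) * (k : ℤ) - 1 - ∑ a, (χ a k : ℤ)

section PartialSum

variable {p : ℕ → ℕ} {r m : ℕ}

lemma partialSum_mono (p : ℕ → ℕ) : Monotone (partialSum p) :=
  fun _ _ h => sum_le_sum_of_subset (Icc_subset_Icc_right h)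

lemma partialSum_add_sum_Ioc (p : ℕ → ℕ) (hrm : r ≤ m) :
    partialSum p r + ∑ j ∈ Ioc r m, p j = partialSum p m :=
  sum_Ioc_consecutive p (Nat.zero_le r) hrm

lemma mul_le_partialSum (hp : AntitoneOn p (Set.Ici 1)) (r : ℕ) :
    r * p r ≤ partialSum p r := by
  simpa [partialSum] using card_nsmul_le_sum (Icc 1 r) p (p r) fun j hj =>
    hp (mem_Icc.1 hj).1 ((mem_Icc.1 hj).1.trans (mem_Icc.1 hj).2) (mem_Icc.1 hj).2

lemma partialSum_le_mul (hp : AntitoneOn p (Set.Ici 1)) (r : ℕ) :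
    partialSum p r ≤ r * p 1 := by
  simpa [partialSum] using sum_le_card_nsmul (Icc 1 r) p (p 1) fun j hj =>
    hp (Set.mem_Ici.2 le_rfl) (mem_Icc.1 hj).1 (mem_Icc.1 hj).1

lemma partialSum_le_add_mul (hp : AntitoneOn p (Set.Ici 1)) (hr : 1 ≤ r) (hrm : r ≤ m) :
    partialSum p m ≤ partialSum p r + (m - r) * p r := by
  have htail : ∑ j ∈ Ioc r m, p j ≤ (m - r) * p r := by
    simpa using sum_le_card_nsmul (Ioc r m) p (p r) fun j hj =>
      hp (Set.mem_Ici.2 hr) (Set.mem_Ici.2 (hr.trans (mem_Ioc.1 hj).1.le)) (mem_Ioc.1 hj).1.le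
  rw [← partialSum_add_sum_Ioc p hrm]
  omega

lemma apply_one_eq_of_partialSum_eq_mul (hp : AntitoneOn p (Set.Ici 1)) (hr : 1 ≤ r)
    (h : partialSum p r = r * p r) : p 1 = p r := by
  have hle : ∀ j ∈ Icc 1 r, p r ≤ p j := fun j hj =>
    hp (mem_Icc.1 hj).1 (Set.mem_Ici.2 hr) (mem_Icc.1 hj).2
  have hsum : ∑ _j ∈ Icc 1 r, p r = ∑ j ∈ Icc 1 r, p j := by simpa [partialSum] using h.symm
  exact ((sum_eq_sum_iff_of_le hle).1 hsum 1 (mem_Icc.2 ⟨le_rfl, hr⟩)).symm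

/-- The average of `p` over `[1, r]` is at least its average over `[1, m]`; the defect term
vanishes only if `p` is constant on `[1, r]`. -/
lemma mul_partialSum_add_le (hp : AntitoneOn p (Set.Ici 1)) (hrm : r ≤ m) :
    r * partialSum p m + (m - r) * (partialSum p r - r * p r) ≤ m * partialSum p r := by
  rcases Nat.eq_zero_or_pos r with rfl | hr
  · simp [partialSum]
  have htail := partialSum_le_add_mul hp hr hrm
  have hhead := mul_le_partialSum hp r
  obtain ⟨q, rfl⟩ := Nat.exists_eq_add_of_le hrm
  rw [Nat.add_sub_cancel_left] at htail ⊢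
  zify [hhead] at htail ⊢
  nlinarith

end PartialSum

section ChiOf

variable {p : ℕ → ℕ} {k i : ℕ}

lemma chiOf_le (hi : 1 ≤ i) (h : k ≤ partialSum p i) : chiOf p k ≤ i :=
  Nat.sInf_le ⟨hi, h⟩

lemma chiOf_spec (hi : 1 ≤ i) (h : k ≤ partialSum p i) :
    1 ≤ chiOf p k ∧ k ≤ partialSum p (chiOf p k) :=
  Nat.sInf_mem (s := {i | 1 ≤ i ∧ k ≤ partialSum p i}) ⟨i, hi, h⟩

lemma partialSum_pred_chiOf_lt (p : ℕ → ℕ) (hk : 1 ≤ k) : partialSum p (chiOf p k - 1) < k := by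
  by_cases h1 : chiOf p k - 1 = 0
  · rw [h1]
    exact hk
  · by_contra! h
    have := chiOf_le (by omega) h
    omega

end ChiOf

namespace IsPartitionOf

variable {N : ℕ} {p : ℕ → ℕ} {k : ℕ}

lemma antitoneOn (hp : IsPartitionOf N p) : AntitoneOn p (Set.Ici 1) :=
  antitoneOn_nat_Ici_of_succ_le hp.1

lemma partialSum_self (hp : IsPartitionOf N p) : partialSum p N = N :=
  hp.2.1

lemma chiOf_spec (hp : IsPartitionOf N p) (hk : 1 ≤ k) (hkN : k ≤ N) :
    1 ≤ chiOf p k ∧ k ≤ partialSum p (chiOf p k) :=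
  _root_.chiOf_spec (hk.trans hkN) (hkN.trans hp.partialSum_self.ge)

lemma chiOf_le_chiOf_self (hp : IsPartitionOf N p) (hk : 1 ≤ k) (hkN : k ≤ N) :
    chiOf p k ≤ chiOf p N := by
  obtain ⟨hm, hNm⟩ := hp.chiOf_spec (hk.trans hkN) le_rfl
  exact chiOf_le hm (hkN.trans hNm)

lemma partialSum_chiOf_self (hp : IsPartitionOf N p) (hN : 1 ≤ N) :
    partialSum p (chiOf p N) = N := by
  obtain ⟨hm, hNm⟩ := hp.chiOf_spec hN le_rfl
  have hmN : chiOf p N ≤ N := chiOf_le hN hp.partialSum_self.ge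
  exact le_antisymm ((partialSum_mono p hmN).trans_eq hp.partialSum_self) hNm

lemma le_chiOf_mul (hp : IsPartitionOf N p) (hk : 1 ≤ k) (hkN : k ≤ N) :
    k ≤ chiOf p k * p 1 :=
  (hp.chiOf_spec hk hkN).2.trans (partialSum_le_mul hp.antitoneOn _)

/-- Concavity of the partial sums puts the point `(χ_k - 1, k - 1)` above the chord from
`(0, 0)` to `(χ_N, N)`. -/
lemma chord (hp : IsPartitionOf N p) (hk : 1 ≤ k) (hkN : k ≤ N) :
    N * (chiOf p k - 1) ≤ (k - 1) * chiOf p N := by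
  have hrm : chiOf p k - 1 ≤ chiOf p N := (Nat.sub_le _ 1).trans (hp.chiOf_le_chiOf_self hk hkN)
  have havg := mul_partialSum_add_le hp.antitoneOn hrm
  rw [hp.partialSum_chiOf_self (hk.trans hkN)] at havg
  have hlt := partialSum_pred_chiOf_lt p hk
  calc N * (chiOf p k - 1) = (chiOf p k - 1) * N := Nat.mul_comm _ _
    _ ≤ chiOf p N * partialSum p (chiOf p k - 1) := le_of_add_le_left havg
    _ ≤ (k - 1) * chiOf p N := by rw [Nat.mul_comm]; gcongr; omega

/-- Equality in `chord` forces the partition to be rectangular. -/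
lemma chiOf_self_mul_apply_one_of_chord_eq (hp : IsPartitionOf N p) (hk : 2 ≤ k) (hkN : k ≤ N)
    (heq : N * (chiOf p k - 1) = (k - 1) * chiOf p N) :
    chiOf p N * p 1 = N := by
  set m := chiOf p N
  set r := chiOf p k - 1
  have hm : 1 ≤ m := (hp.chiOf_spec (by omega) le_rfl).1
  have hr : 1 ≤ r := Nat.pos_of_ne_zero fun hr0 => by
    rw [hr0, Nat.mul_zero] at heq
    exact (Nat.mul_pos (by omega) hm).ne' heq.symm
  have hrm : r < m := by
    refine lt_of_le_of_ne ((Nat.sub_le _ 1).trans (hp.chiOf_le_chiOf_self (by omega) hkN)) ?_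
    rintro hrm
    rw [hrm] at heq
    have := Nat.eq_of_mul_eq_mul_right hm heq
    omega
  have havg := mul_partialSum_add_le hp.antitoneOn hrm.le
  rw [hp.partialSum_chiOf_self (by omega)] at havg
  have hlt : partialSum p r < k := partialSum_pred_chiOf_lt p (by omega)
  have hSr : m * partialSum p r ≤ r * N := by
    calc m * partialSum p r ≤ m * (k - 1) := by gcongr; omega
      _ = r * N := by rw [Nat.mul_comm r, heq, Nat.mul_comm]
  have hflat : partialSum p r = r * p r := by
    have hhead := mul_le_partialSum hp.antitoneOn r
    have : (m - r) * (partialSum p r - r * p r) = 0 := by omega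
    rcases Nat.mul_eq_zero.1 this with h | h <;> omega
  have hp1 := apply_one_eq_of_partialSum_eq_mul hp.antitoneOn hr hflat
  have : r * (m * p 1) = r * N := by
    rw [hp1, ← Nat.mul_assoc, Nat.mul_comm r m, Nat.mul_assoc, ← hflat]
    omega
  exact Nat.eq_of_mul_eq_mul_left hr this

end IsPartitionOf

section HitchinDegree

variable {N n k : ℕ} {p χ : Fin n → ℕ → ℕ}

lemma sum_chord_slack (χ : Fin n → ℕ → ℕ) (N k : ℕ) :
    ∑ a, (((k : ℤ) - 1) * χ a N - N * (χ a k - 1)) =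
      N * (hitchinDegree n χ k + 2) - (k - 1) * (hitchinDegree n χ N + 1) := by
  simp only [hitchinDegree, sum_sub_distrib, ← mul_sum, sum_const, card_univ, Fintype.card_fin,
    nsmul_eq_mul]
  ring

lemma chord_eq_of_hitchinDegree_lt (h : ∀ a, IsVanishingOrderSeq N (p a) (χ a))
    (hk : 2 ≤ k) (hkN : k ≤ N) (hdN : -1 ≤ hitchinDegree n χ N)
    (hdk : hitchinDegree n χ k < -1) :
    (∀ a, N * (chiOf (p a) k - 1) = (k - 1) * chiOf (p a) N) ∧ hitchinDegree n χ N = -1 := by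
  have hcast a : ((k : ℤ) - 1) * χ a N - N * (χ a k - 1) =
      (((k - 1) * chiOf (p a) N : ℕ) : ℤ) - ((N * (chiOf (p a) k - 1) : ℕ) : ℤ) := by
    have hχk := (h a).2 k (by omega) hkN
    have hχk1 := ((h a).1.chiOf_spec (k := k) (by omega) hkN).1
    rw [hχk, (h a).2 N (by omega) le_rfl]
    push_cast [hχk1, show 1 ≤ k by omega]
    ring
  have hslack a : 0 ≤ ((k : ℤ) - 1) * χ a N - N * (χ a k - 1) := by
    rw [hcast, sub_nonneg]
    exact_mod_cast (h a).1.chord (by omega) hkN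
  have hzero : ∑ a, (((k : ℤ) - 1) * χ a N - N * (χ a k - 1)) = 0 := by
    refine le_antisymm ?_ (sum_nonneg fun a _ => hslack a)
    rw [sum_chord_slack]
    nlinarith
  refine ⟨fun a => ?_, ?_⟩
  · have := (sum_eq_zero_iff_of_nonneg fun a _ => hslack a).1 hzero a (mem_univ a)
    rw [hcast, sub_eq_zero] at this
    exact_mod_cast this.symm
  · rw [sum_chord_slack] at hzero
    have hk1 : (1 : ℤ) ≤ k - 1 := by omega
    nlinarith

lemma eq_two_and_two_mul_eq_of_sum_eq (hn : 2 ≤ n) (hN : 0 < N) (x : Fin n → ℕ)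
    (hx : ∀ a, 2 * x a ≤ N) (hsum : ∑ a, (x a : ℤ) = (n - 1) * N) :
    n = 2 ∧ ∀ a, 2 * x a = N := by
  have hnonneg a : 0 ≤ (N : ℤ) - 2 * x a := by
    rw [sub_nonneg]
    exact_mod_cast hx a
  have hdefect : ∑ a, ((N : ℤ) - 2 * x a) = (2 - n) * N := by
    rw [sum_sub_distrib, ← mul_sum, hsum, sum_const, card_univ, Fintype.card_fin, nsmul_eq_mul]
    ring
  have hzero : ∑ a, ((N : ℤ) - 2 * x a) = 0 := by
    refine le_antisymm ?_ (sum_nonneg fun a _ => hnonneg a)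
    rw [hdefect]
    nlinarith
  refine ⟨?_, fun a => ?_⟩
  · rw [hdefect] at hzero
    have : (2 : ℤ) - n = 0 := (mul_eq_zero.1 hzero).resolve_right (by omega)
    omega
  · have := (sum_eq_zero_iff_of_nonneg fun a _ => hnonneg a).1 hzero a (mem_univ a)
    omega

lemma hitchinDegree_le_neg_one (h : ∀ a, IsVanishingOrderSeq N (p a) (χ a)) (hn : n ≤ 2)
    (hp : ∀ a, p a 1 ≤ 2) (hk : 1 ≤ k) (hkN : k ≤ N) :
    hitchinDegree n χ k ≤ -1 := by
  have hχ a : (k : ℤ) ≤ 2 * χ a k := by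
    rw [(h a).2 k hk hkN, mul_comm]
    exact_mod_cast ((h a).1.le_chiOf_mul hk hkN).trans (Nat.mul_le_mul_left _ (hp a))
  have hsum : (n : ℤ) * k ≤ 2 * ∑ a, (χ a k : ℤ) := by
    simpa [mul_sum] using sum_le_sum fun a (_ : a ∈ univ) => hχ a
  have hn' : (n : ℤ) ≤ 2 := by exact_mod_cast hn
  unfold hitchinDegree
  nlinarith

end HitchinDegree

theorem simpson_conditions_iff_OK_general
    (N n : ℕ) (hn : 2 ≤ n)
    (p χ : Fin n → ℕ → ℕ)
    (h : ∀ a, IsVanishingOrderSeq N (p a) (χ a) ∧ 2 ≤ p a 1)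
    (hdN : -1 ≤ ((n : ℤ) - 1) * (N : ℤ) - 1 - ∑ a, (χ a N : ℤ))
    (hsum : 0 ≤ ∑ k ∈ Finset.Icc 2 N,
        ((((n : ℤ) - 1) * (k : ℤ) - 1 - ∑ a, (χ a k : ℤ)) + 1)) :
    ∀ k, 2 ≤ k → k ≤ N → -1 ≤ ((n : ℤ) - 1) * (k : ℤ) - 1 - ∑ a, (χ a k : ℤ) := by
  change -1 ≤ hitchinDegree n χ N at hdN
  change 0 ≤ ∑ k ∈ Icc 2 N, (hitchinDegree n χ k + 1) at hsum
  intro k hk2 hkN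
  change -1 ≤ hitchinDegree n χ k
  by_contra! hdk
  have hvo a := (h a).1
  have hχN a : χ a N = chiOf (p a) N := (hvo a).2 N (by omega) le_rfl
  obtain ⟨hchord, hdN_eq⟩ := chord_eq_of_hitchinDegree_lt hvo hk2 hkN hdN hdk
  have hrect a : chiOf (p a) N * p a 1 = N :=
    (hvo a).1.chiOf_self_mul_apply_one_of_chord_eq hk2 hkN (hchord a)
  obtain ⟨hn2, hhalf⟩ := eq_two_and_two_mul_eq_of_sum_eq hn (N := N) (by omega) (fun a => χ a N)
    (fun a => by
      rw [hχN, mul_comm]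
      exact (Nat.mul_le_mul_left _ (h a).2).trans_eq (hrect a))
    (by unfold hitchinDegree at hdN_eq; linarith)
  have hp1 a : p a 1 ≤ 2 := by
    have := hhalf a
    rw [hχN] at this
    exact Nat.le_of_mul_le_mul_left (by rw [hrect a]; omega) (by omega : 0 < chiOf (p a) N)
  have hneg : ∑ j ∈ Icc 2 N, (hitchinDegree n χ j + 1) < 0 :=
    sum_neg' (fun j hj => by
        linarith [hitchinDegree_le_neg_one hvo hn2.le hp1 (one_le_two.trans (mem_Icc.1 hj).1)
          (mem_Icc.1 hj).2])
      ⟨k, mem_Icc.2 ⟨hk2, hkN⟩, by linarith⟩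
  exact hneg.not_ge hsum

/-- with `d_k := (n−1)k − 1 − ∑ₐ χ⁽ᵃ⁾_k` (the degree of the Hitchin line
bundle `L_k` in the presence of one additional regular puncture), if `d_N ≥ −1` and
`∑_{k=2}^{N} (d_k + 1) ≥ 0`, then `d_k ≥ −1` for every `k ∈ {2,…,N}`. -/
theorem simpson_conditions_iff_OK
    (N n : ℕ) (hN : 2 ≤ N) (hn : 2 ≤ n)
    (p χ : Fin n → ℕ → ℕ)
    (h : ∀ a, IsVanishingOrderSeq N (p a) (χ a) ∧ 2 ≤ p a 1)
    (hdN : -1 ≤ ((n : ℤ) - 1) * (N : ℤ) - 1 - ∑ a, (χ a N : ℤ))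
    (hsum : 0 ≤ ∑ k ∈ Finset.Icc 2 N,
        ((((n : ℤ) - 1) * (k : ℤ) - 1 - ∑ a, (χ a k : ℤ)) + 1)) :
    ∀ k, 2 ≤ k → k ≤ N → -1 ≤ ((n : ℤ) - 1) * (k : ℤ) - 1 - ∑ a, (χ a k : ℤ) :=
  simpson_conditions_iff_OK_general N n hn p χ h hdN hsum
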